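/- arXiv:2305.01060 — 9 statements merged into one kernel-verified Lean document; each statement's English description precedes it below -/
import Mathlib

section
/- Fix real numbers δ, ρ with ρ ≠ 0, and real-valued differentiable functions T_U(t), T_I(t). For τ ∈ ℝ define T_U'(t,τ) = T_U(t) + T_I(t) - (T_I(t)/ρ)(δ e^{-ρτ} + ρ - δ), T_I'(t,τ) = (T_I(t)/ρ)(δ e^{-ρτ} + ρ - δ), and δ'(τ) = δρ / ((ρ - δ)e^{ρτ} + δ) (assuming the denominator is nonzero). Then ∂T_U'/∂τ = T_I' · δ' and ∂T_I'/∂τ = -T_I' · δ'. -/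
open Real

/-! The profile `δ e^{-ρτ} + ρ - δ` factors as `e^{-ρτ} ((ρ - δ) e^{ρτ} + δ)`, so multiplying `T_I'` by
`δ'` cancels the denominator of `δ'` and leaves `T_I δ e^{-ρτ}`, which is exactly `-∂T_I'/∂τ`.
Since `T_U' + T_I'` does not depend on `τ`, the equation for `T_U'` follows. -/

theorem hasDerivAt_exp_profile (δ ρ τ : ℝ) :
    HasDerivAt (fun s => δ * exp (-ρ * s) + ρ - δ) (-(ρ * (δ * exp (-ρ * τ)))) τ := by
  have h := (((hasDerivAt_id' τ).const_mul (-ρ)).exp.const_mul δ).add_const ρ |>.sub_const δ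
  exact h.congr_deriv (by ring)

theorem exp_profile_eq_exp_mul (δ ρ τ : ℝ) :
    δ * exp (-ρ * τ) + ρ - δ = exp (-ρ * τ) * ((ρ - δ) * exp (ρ * τ) + δ) := by
  have h : exp (-ρ * τ) * exp (ρ * τ) = 1 := by rw [← exp_add]; simp
  linear_combination -(ρ - δ) * h

theorem exp_profile_div_mul_rate {δ ρ τ : ℝ} (hρ : ρ ≠ 0)
    (hden : (ρ - δ) * exp (ρ * τ) + δ ≠ 0) :
    (δ * exp (-ρ * τ) + ρ - δ) / ρ * (δ * ρ / ((ρ - δ) * exp (ρ * τ) + δ)) =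
      δ * exp (-ρ * τ) := by
  rw [exp_profile_eq_exp_mul]
  field_simp

theorem stmt_2_general (δ ρ : ℝ) (hρ : ρ ≠ 0)
    (T_U T_I : ℝ → ℝ)
    (T_U' T_I' : ℝ → ℝ → ℝ) (δ' : ℝ → ℝ)
    (hTU' : ∀ t τ, T_U' t τ =
      T_U t + T_I t - (T_I t / ρ) * (δ * Real.exp (-ρ * τ) + ρ - δ))
    (hTI' : ∀ t τ, T_I' t τ = (T_I t / ρ) * (δ * Real.exp (-ρ * τ) + ρ - δ))
    (hδ' : ∀ τ, δ' τ = δ * ρ / ((ρ - δ) * Real.exp (ρ * τ) + δ))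
    (t τ : ℝ) (hden : (ρ - δ) * Real.exp (ρ * τ) + δ ≠ 0) :
    HasDerivAt (fun s => T_U' t s) (T_I' t τ * δ' τ) τ ∧
    HasDerivAt (fun s => T_I' t s) (-(T_I' t τ * δ' τ)) τ := by
  have hrate : T_I' t τ * δ' τ = T_I t * (δ * exp (-ρ * τ)) := by
    rw [hTI', hδ']
    linear_combination T_I t * exp_profile_div_mul_rate hρ hden
  have hI : HasDerivAt (fun s => T_I' t s) (-(T_I' t τ * δ' τ)) τ := by
    rw [hrate, show (fun s => T_I' t s) = _ from funext (hTI' t)]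
    exact ((hasDerivAt_exp_profile δ ρ τ).const_mul (T_I t / ρ)).congr_deriv (by field_simp)
  have hU : T_U' t = fun s => T_U t + T_I t - T_I' t s := by
    funext s
    rw [hTU', hTI']
  refine ⟨?_, hI⟩
  rw [hU]
  simpa using (hasDerivAt_const τ (T_U t + T_I t)).fun_sub hI

theorem stmt_2 (δ ρ : ℝ) (hρ : ρ ≠ 0)
    (T_U T_I : ℝ → ℝ) (hTU : Differentiable ℝ T_U) (hTI : Differentiable ℝ T_I)
    (T_U' T_I' : ℝ → ℝ → ℝ) (δ' : ℝ → ℝ)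
    (hTU' : ∀ t τ, T_U' t τ =
      T_U t + T_I t - (T_I t / ρ) * (δ * Real.exp (-ρ * τ) + ρ - δ))
    (hTI' : ∀ t τ, T_I' t τ = (T_I t / ρ) * (δ * Real.exp (-ρ * τ) + ρ - δ))
    (hδ' : ∀ τ, δ' τ = δ * ρ / ((ρ - δ) * Real.exp (ρ * τ) + δ))
    (t τ : ℝ) (hden : (ρ - δ) * Real.exp (ρ * τ) + δ ≠ 0) :
    HasDerivAt (fun s => T_U' t s) (T_I' t τ * δ' τ) τ ∧
    HasDerivAt (fun s => T_I' t s) (-(T_I' t τ * δ' τ)) τ :=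
  stmt_2_general δ ρ hρ T_U T_I T_U' T_I' δ' hTU' hTI' hδ' t τ hden
end

section
/- Let T_U, T_I, V : ℝ → ℝ be differentiable, η : ℝ → ℝ, and constants λ, ρ, δ, N, c satisfy the HIV ODE system: T_U' = λ - ρT_U - η T_U V, T_I' = η T_U V - δ T_I, V' = Nδ T_I - cV. Fix τ ∈ ℝ with ρ ≠ 0, (ρ-δ)e^{ρτ} + δ ≠ 0, and assume V(t) ≠ 0, and V(t)[T_I(t)δ + T_U(t)ρ]e^{ρτ} - V(t)T_I(t)δ ≠ 0 for all t. Define the transformed quantities: T̃_U(t) = T_U(t) + T_I(t) - (T_I(t)/ρ)(δe^{-ρτ}+ρ-δ), T̃_I(t) = (T_I(t)/ρ)(δe^{-ρτ}+ρ-δ), Ṽ(t) = V(t), λ̃ = λ, ρ̃ = ρ, δ̃ = δρ/((ρ-δ)e^{ρτ}+δ), Ñ = Ne^{ρτ}, c̃ = c, and η̃(t) = [η(t)T_U(t)V(t)ρe^{ρτ} + (T_I(t)δ² - T_I(t)δρ - η(t)T_U(t)V(t)δ)(e^{ρτ}-1)] / [V(t)(T_I(t)δ + T_U(t)ρ)e^{ρτ}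 - V(t)T_I(t)δ]. Then the transformed quantities satisfy the same HIV ODE system: dT̃_U/dt = λ̃ - ρ̃T̃_U - η̃T̃_UṼ, dT̃_I/dt = η̃T̃_UṼ - δ̃T̃_I, dṼ/dt = Ñδ̃T̃_I - c̃Ṽ. -/
/-!
The transformation only redistributes cells between the two compartments: it rescales the
infected cells by the constant `k = (δ e^{-ρτ} + ρ - δ) / ρ` and keeps the total `T_U + T_I`
fixed. Summing the first two equations, the total evolves by `λ - ρ T_U - δ T_I`, which is
unchanged once `δ̃ k = δ - ρ (1 - k)`; the virus equation is unchanged once `Ñ δ̃ k = N δ`;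
and `η̃` is exactly the infection rate that makes the infected-cell equation hold.
-/

def HIVSystem (T_U T_I V η : ℝ → ℝ) (lam ρ δ N c : ℝ) : Prop :=
  (∀ t, HasDerivAt T_U (lam - ρ * T_U t - η t * T_U t * V t) t) ∧
  (∀ t, HasDerivAt T_I (η t * T_U t * V t - δ * T_I t) t) ∧
  (∀ t, HasDerivAt V (N * δ * T_I t - c * V t) t)

theorem HIVSystem.rescale_infected {T_U T_I V η T_U' T_I' η' : ℝ → ℝ}
    {lam ρ δ N c δ' N' k : ℝ} (h : HIVSystem T_U T_I V η lam ρ δ N c)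
    (hTU' : ∀ t, T_U' t = T_U t + (1 - k) * T_I t) (hTI' : ∀ t, T_I' t = k * T_I t)
    (hδ' : δ' * k = δ - ρ * (1 - k)) (hN' : N' * δ' * k = N * δ)
    (hη' : ∀ t, η' t * T_U' t * V t = k * η t * T_U t * V t + (1 - k) * (δ - ρ) * T_I t) :
    HIVSystem T_U' T_I' V η' lam ρ δ' N' c := by
  obtain ⟨hTU, hTI, hV⟩ := h
  obtain rfl : T_U' = fun t => T_U t + (1 - k) * T_I t := funext hTU'
  obtain rfl : T_I' = fun t => k * T_I t := funext hTI'
  dsimp only at hη'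
  refine ⟨fun t => ?_, fun t => ?_, fun t => ?_⟩
  · refine ((hTU t).add ((hTI t).const_mul (1 - k))).congr_deriv ?_
    linear_combination hη' t
  · refine ((hTI t).const_mul k).congr_deriv ?_
    linear_combination T_I t * hδ' - hη' t
  · refine (hV t).congr_deriv ?_
    linear_combination -T_I t * hN'

open Real in
theorem stmt_3_general (T_U T_I V η : ℝ → ℝ) (lam ρ δ N c : ℝ)
    (hTU : ∀ t, HasDerivAt T_U (lam - ρ * T_U t - η t * T_U t * V t) t)
    (hTI : ∀ t, HasDerivAt T_I (η t * T_U t * V t - δ * T_I t) t)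
    (hV : ∀ t, HasDerivAt V (N * δ * T_I t - c * V t) t)
    (τ : ℝ) (hρ : ρ ≠ 0) (hden : (ρ - δ) * exp (ρ * τ) + δ ≠ 0)
    (hden2 : ∀ t, V t * (T_I t * δ + T_U t * ρ) * exp (ρ * τ) - V t * T_I t * δ ≠ 0)
    (T_U' T_I' V' η' : ℝ → ℝ) (lam' ρ' δ' N' c' : ℝ)
    (hTU' : ∀ t, T_U' t = T_U t + T_I t - (T_I t / ρ) * (δ * exp (-ρ * τ) + ρ - δ))
    (hTI' : ∀ t, T_I' t = (T_I t / ρ) * (δ * exp (-ρ * τ) + ρ - δ))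
    (hV' : ∀ t, V' t = V t)
    (hlam' : lam' = lam) (hρ' : ρ' = ρ)
    (hδ' : δ' = δ * ρ / ((ρ - δ) * exp (ρ * τ) + δ))
    (hN' : N' = N * exp (ρ * τ)) (hc' : c' = c)
    (hη' : ∀ t, η' t =
      (η t * T_U t * V t * ρ * exp (ρ * τ) +
        (T_I t * δ ^ 2 - T_I t * δ * ρ - η t * T_U t * V t * δ) * (exp (ρ * τ) - 1)) /
      (V t * (T_I t * δ + T_U t * ρ) * exp (ρ * τ) - V t * T_I t * δ)) :
    (∀ t, HasDerivAt T_U' (lam' - ρ' * T_U' t - η' t * T_U' t * V' t) t) ∧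
    (∀ t, HasDerivAt T_I' (η' t * T_U' t * V' t - δ' * T_I' t) t) ∧
    (∀ t, HasDerivAt V' (N' * δ' * T_I' t - c' * V' t) t) := by
  subst lam' ρ' c' δ' N'
  obtain rfl : V' = V := funext hV'
  have hexp_neg : exp (-ρ * τ) = (exp (ρ * τ))⁻¹ := by rw [neg_mul, exp_neg]
  refine HIVSystem.rescale_infected
    (k := ((ρ - δ) * exp (ρ * τ) + δ) / (ρ * exp (ρ * τ))) ⟨hTU, hTI, hV⟩
    (fun t => by rw [hTU', hexp_neg]; field_simp; ring)
    (fun t => by rw [hTI', hexp_neg]; field_simp; ring) ?_ ?_ (fun t => ?_)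
  · field_simp
    ring
  · field_simp
    exact mul_div_cancel_right₀ _ (by rwa [mul_comm] at hden)
  · rw [hη' t, div_mul_eq_mul_div, div_mul_eq_mul_div, div_eq_iff (hden2 t), hTU', hexp_neg]
    field_simp
    ring

open Real in
theorem stmt_3 (T_U T_I V η : ℝ → ℝ) (lam ρ δ N c : ℝ)
    (hTU : ∀ t, HasDerivAt T_U (lam - ρ * T_U t - η t * T_U t * V t) t)
    (hTI : ∀ t, HasDerivAt T_I (η t * T_U t * V t - δ * T_I t) t)
    (hV : ∀ t, HasDerivAt V (N * δ * T_I t - c * V t) t)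
    (τ : ℝ) (hρ : ρ ≠ 0) (hden : (ρ - δ) * exp (ρ * τ) + δ ≠ 0)
    (hVne : ∀ t, V t ≠ 0)
    (hden2 : ∀ t, V t * (T_I t * δ + T_U t * ρ) * exp (ρ * τ) - V t * T_I t * δ ≠ 0)
    (T_U' T_I' V' η' : ℝ → ℝ) (lam' ρ' δ' N' c' : ℝ)
    (hTU' : ∀ t, T_U' t = T_U t + T_I t - (T_I t / ρ) * (δ * exp (-ρ * τ) + ρ - δ))
    (hTI' : ∀ t, T_I' t = (T_I t / ρ) * (δ * exp (-ρ * τ) + ρ - δ))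
    (hV' : ∀ t, V' t = V t)
    (hlam' : lam' = lam) (hρ' : ρ' = ρ)
    (hδ' : δ' = δ * ρ / ((ρ - δ) * exp (ρ * τ) + δ))
    (hN' : N' = N * exp (ρ * τ)) (hc' : c' = c)
    (hη' : ∀ t, η' t =
      (η t * T_U t * V t * ρ * exp (ρ * τ) +
        (T_I t * δ ^ 2 - T_I t * δ * ρ - η t * T_U t * V t * δ) * (exp (ρ * τ) - 1)) /
      (V t * (T_I t * δ + T_U t * ρ) * exp (ρ * τ) - V t * T_I t * δ)) :
    (∀ t, HasDerivAt T_U' (lam' - ρ' * T_U' t - η' t * T_U' t * V' t) t) ∧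
    (∀ t, HasDerivAt T_I' (η' t * T_U' t * V' t - δ' * T_I' t) t) ∧
    (∀ t, HasDerivAt V' (N' * δ' * T_I' t - c' * V' t) t) :=
  stmt_3_general T_U T_I V η lam ρ δ N c hTU hTI hV τ hρ hden hden2 T_U' T_I' V' η' lam' ρ' δ' N' c'
    hTU' hTI' hV' hlam' hρ' hδ' hN' hc' hη'
end

section
/- Let S, E, I, A, R : ℝ → ℝ be differentiable and β : ℝ → ℝ, with constants γ, p, μ₁, μ₂, satisfying the SEIAR system: S' = -βS(I+A), E' = βS(I+A) - γE, I' = γpE - μ₁I, A' = γ(1-p)E - μ₂A, R' = μ₁I + μ₂A. Fix τ ∈ ℝ with S(t) + τ ≠ 0 for all t, and define S̃(t) = S(t) + τ, Ẽ = E, Ĩ = I, Ã = A, R̃(t) = R(t) - τ, and β̃(t) = β(t)S(t)/(S(t)+τ), with the other parameters unchanged. Then the transformed quantities satisfy the same SEIAR system with β replaced by β̃, and the outputs I, A, S+E+R are unchanged: Ĩ = I, Ã = A, and S̃ + Ẽ + R̃ = S + E + R. -/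
theorem stmt_6 (S E I A R β : ℝ → ℝ) (γ p μ₁ μ₂ : ℝ)
    (hS : ∀ t, HasDerivAt S (-(β t * S t * (I t + A t))) t)
    (hE : ∀ t, HasDerivAt E (β t * S t * (I t + A t) - γ * E t) t)
    (hI : ∀ t, HasDerivAt I (γ * p * E t - μ₁ * I t) t)
    (hA : ∀ t, HasDerivAt A (γ * (1 - p) * E t - μ₂ * A t) t)
    (hR : ∀ t, HasDerivAt R (μ₁ * I t + μ₂ * A t) t)
    (τ : ℝ) (hSτ : ∀ t, S t + τ ≠ 0)
    (S' E' I' A' R' β' : ℝ → ℝ)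
    (hS' : ∀ t, S' t = S t + τ) (hE' : ∀ t, E' t = E t)
    (hI' : ∀ t, I' t = I t) (hA' : ∀ t, A' t = A t)
    (hR' : ∀ t, R' t = R t - τ)
    (hβ' : ∀ t, β' t = β t * S t / (S t + τ)) :
    (∀ t, HasDerivAt S' (-(β' t * S' t * (I' t + A' t))) t) ∧
    (∀ t, HasDerivAt E' (β' t * S' t * (I' t + A' t) - γ * E' t) t) ∧
    (∀ t, HasDerivAt I' (γ * p * E' t - μ₁ * I' t) t) ∧
    (∀ t, HasDerivAt A' (γ * (1 - p) * E' t - μ₂ * A' t) t) ∧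
    (∀ t, HasDerivAt R' (μ₁ * I' t + μ₂ * A' t) t) ∧
    (∀ t, I' t = I t) ∧ (∀ t, A' t = A t) ∧
    (∀ t, S' t + E' t + R' t = S t + E t + R t) := by
  have hSe : S' = fun t => S t + τ := funext hS'
  have hEe : E' = E := funext hE'
  have hIe : I' = I := funext hI'
  have hAe : A' = A := funext hA'
  have hRe : R' = fun t => R t - τ := funext hR'
  have key : ∀ t, β' t * S' t = β t * S t := by
    intro t
    rw [hβ' t, hS' t]
    rw [div_mul_eq_mul_div, mul_div_assoc, div_self (hSτ t), mul_one]
  refine ⟨?_, ?_, ?_, ?_, ?_, hI', hA', ?_⟩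
  · intro t
    rw [key, hI', hA', hSe]
    exact (hS t).add_const τ
  · intro t
    rw [key, hI', hA', hE' t, hEe]
    exact hE t
  · intro t
    rw [hE' t, hI' t, hIe]
    exact hI t
  · intro t
    rw [hE' t, hA' t, hAe]
    exact hA t
  · intro t
    rw [hI' t, hA' t, hRe]
    exact (hR t).sub_const τ
  · intro t
    rw [hS', hE', hR']; ring
end

section
/- Let S, E, I, A, R : ℝ → ℝ be differentiable and β : ℝ → ℝ, with constants γ, p, μ₁, μ₂, satisfying the SEIAR system: S' = -βS(I+A), E' = βS(I+A) - γE, I' = γpE - μ₁I, A' = γ(1-p)E - μ₂A, R' = μ₁I + μ₂A. Fix τ ∈ ℝ, and assume A(t)+I(t) ≠ 0 and E(t) - (E(t)+S(t))e^τ ≠ 0 for all t. Define S̃(t) = S(t) + E(t)(1 - e^{-τ}), Ẽ(t) = E(t)e^{-τ}, Ĩ = I, Ã = A, R̃ = R, γ̃ = γe^τ, and β̃(t) = [γE(t)(1-e^τ) - S(t)β(t)(A(t)+I(t))] / [(A(t)+I(t))(E(t) - (E(t)+S(t))e^τ)], with μ₁, μ₂, p unchanged. Then the transformed quantities satisfy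 the same SEIAR system with β, γ replaced by β̃, γ̃, and the outputs are unchanged: Ĩ = I, Ã = A, S̃ + Ẽ + R̃ = S + E + R. -/
/-!
Only `I`, `A` and `S + E + R` are observed. Shrinking `E` by the factor `c = e^τ` while speeding
up the rate `γ` by the same factor keeps the flux `γ E` into `I` and `A` unchanged; the mass
removed from `E` is moved to `S`. The new transmission rate `β̃` is then forced by requiring the
new incidence to be `β̃ S̃ (I + A) = γ E (1 - c⁻¹) + c⁻¹ β S (I + A)`, which is exactly what makes
`S̃` and `Ẽ` satisfy their equations.
-/

def IsSEIARSolution (S E I A R β : ℝ → ℝ) (γ p μ₁ μ₂ : ℝ) : Prop :=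
  (∀ t, HasDerivAt S (-(β t * S t * (I t + A t))) t) ∧
  (∀ t, HasDerivAt E (β t * S t * (I t + A t) - γ * E t) t) ∧
  (∀ t, HasDerivAt I (γ * p * E t - μ₁ * I t) t) ∧
  (∀ t, HasDerivAt A (γ * (1 - p) * E t - μ₂ * A t) t) ∧
  (∀ t, HasDerivAt R (μ₁ * I t + μ₂ * A t) t)

theorem IsSEIARSolution.rescaleExposed {S E I A R β β' : ℝ → ℝ} {γ p μ₁ μ₂ c : ℝ}
    (h : IsSEIARSolution S E I A R β γ p μ₁ μ₂) (hc : c ≠ 0)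
    (hβ' : ∀ t, β' t * (S t + E t * (1 - c⁻¹)) * (I t + A t) =
      γ * E t * (1 - c⁻¹) + c⁻¹ * (β t * S t * (I t + A t))) :
    IsSEIARSolution (fun t => S t + E t * (1 - c⁻¹)) (fun t => E t * c⁻¹) I A R β'
      (γ * c) p μ₁ μ₂ := by
  obtain ⟨hS, hE, hI, hA, hR⟩ := h
  have hflux : ∀ t, γ * c * (E t * c⁻¹) = γ * E t := fun t => by field_simp
  refine ⟨fun t => ?_, fun t => ?_, fun t => ?_, fun t => ?_, hR⟩
  · refine ((hS t).add ((hE t).mul_const (1 - c⁻¹))).congr_deriv ?_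
    rw [hβ']
    ring
  · refine ((hE t).mul_const c⁻¹).congr_deriv ?_
    rw [hβ', hflux]
    ring
  · convert hI t using 2
    rw [mul_right_comm, hflux, mul_right_comm]
  · convert hA t using 2
    rw [mul_right_comm, hflux, mul_right_comm]

theorem div_mul_eq_rescaled_incidence {β S E X γ c : ℝ} (hc : c ≠ 0) (hX : X ≠ 0)
    (hD : E - (E + S) * c ≠ 0) :
    (γ * E * (1 - c) - S * β * X) / (X * (E - (E + S) * c)) * (S + E * (1 - c⁻¹)) * X =
      γ * E * (1 - c⁻¹) + c⁻¹ * (β * S * X) := by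
  -- the rescaled `S` is a multiple of the denominator, which therefore cancels
  have hS_eq : S + E * (1 - c⁻¹) = -c⁻¹ * (E - (E + S) * c) := by
    field_simp
    ring
  rw [hS_eq, div_mul_eq_mul_div, div_mul_eq_mul_div, div_eq_iff (mul_ne_zero hX hD)]
  field_simp
  ring

open Real in
theorem stmt_7 (S E I A R β : ℝ → ℝ) (γ p μ₁ μ₂ : ℝ)
    (hS : ∀ t, HasDerivAt S (-(β t * S t * (I t + A t))) t)
    (hE : ∀ t, HasDerivAt E (β t * S t * (I t + A t) - γ * E t) t)
    (hI : ∀ t, HasDerivAt I (γ * p * E t - μ₁ * I t) t)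
    (hA : ∀ t, HasDerivAt A (γ * (1 - p) * E t - μ₂ * A t) t)
    (hR : ∀ t, HasDerivAt R (μ₁ * I t + μ₂ * A t) t)
    (τ : ℝ) (hAI : ∀ t, A t + I t ≠ 0)
    (hden : ∀ t, E t - (E t + S t) * exp τ ≠ 0)
    (S' E' I' A' R' β' : ℝ → ℝ) (γ' : ℝ)
    (hS' : ∀ t, S' t = S t + E t * (1 - exp (-τ)))
    (hE' : ∀ t, E' t = E t * exp (-τ))
    (hI' : ∀ t, I' t = I t) (hA' : ∀ t, A' t = A t)
    (hR' : ∀ t, R' t = R t)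
    (hγ' : γ' = γ * exp τ)
    (hβ' : ∀ t, β' t =
      (γ * E t * (1 - exp τ) - S t * β t * (A t + I t)) /
      ((A t + I t) * (E t - (E t + S t) * exp τ))) :
    (∀ t, HasDerivAt S' (-(β' t * S' t * (I' t + A' t))) t) ∧
    (∀ t, HasDerivAt E' (β' t * S' t * (I' t + A' t) - γ' * E' t) t) ∧
    (∀ t, HasDerivAt I' (γ' * p * E' t - μ₁ * I' t) t) ∧
    (∀ t, HasDerivAt A' (γ' * (1 - p) * E' t - μ₂ * A' t) t) ∧
    (∀ t, HasDerivAt R' (μ₁ * I' t + μ₂ * A' t) t) ∧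
    (∀ t, I' t = I t) ∧ (∀ t, A' t = A t) ∧
    (∀ t, S' t + E' t + R' t = S t + E t + R t) := by
  simp only [exp_neg] at hS' hE'
  obtain rfl : S' = fun t => S t + E t * (1 - (exp τ)⁻¹) := funext hS'
  obtain rfl : E' = fun t => E t * (exp τ)⁻¹ := funext hE'
  obtain rfl : I = I' := (funext hI').symm
  obtain rfl : A = A' := (funext hA').symm
  obtain rfl : R = R' := (funext hR').symm
  subst hγ'
  have hsol := IsSEIARSolution.rescaleExposed ⟨hS, hE, hI, hA, hR⟩ (exp_ne_zero τ)
    (β' := β') fun t => by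
      rw [hβ' t, add_comm (I t)]
      exact div_mul_eq_rescaled_incidence (exp_ne_zero τ) (hAI t) (hden t)
  exact ⟨hsol.1, hsol.2.1, hsol.2.2.1, hsol.2.2.2.1, hsol.2.2.2.2,
    fun _ => rfl, fun _ => rfl, fun t => by ring⟩
end

section
/- Let r, φ, v, α, θ : ℝ → ℝ be differentiable, A_x, A_y, ω : ℝ → ℝ, satisfying: r' = v cos(α-φ), φ' = (v/r) sin(α-φ), v' = A_x cos(α-θ) + A_y sin(α-θ), α' = -(A_x/v) sin(α-θ) + (A_y/v) cos(α-θ), θ' = ω, with r(t) ≠ 0 and v(t) ≠ 0 for all t. Fix τ ∈ ℝ and define r̃ = e^τ r, φ̃ = φ, ṽ = e^τ v, α̃ = α, θ̃ = θ, Ã_x = e^τ A_x, Ã_y = e^τ A_y. Then the transformed quantities satisfy the same ODE system (with the same known input ω), and the output φ̃ - θ̃ = φ - θ is unchanged. -/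
open Real in
theorem stmt_9 (r φ v α θ A_x A_y ω : ℝ → ℝ)
    (hr : ∀ t, HasDerivAt r (v t * cos (α t - φ t)) t)
    (hφ : ∀ t, HasDerivAt φ (v t / r t * sin (α t - φ t)) t)
    (hv : ∀ t, HasDerivAt v (A_x t * cos (α t - θ t) + A_y t * sin (α t - θ t)) t)
    (hα : ∀ t, HasDerivAt α
      (-(A_x t / v t) * sin (α t - θ t) + A_y t / v t * cos (α t - θ t)) t)
    (hθ : ∀ t, HasDerivAt θ (ω t) t)
    (hrne : ∀ t, r t ≠ 0) (hvne : ∀ t, v t ≠ 0)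
    (τ : ℝ) (r' φ' v' α' θ' A_x' A_y' : ℝ → ℝ)
    (hr' : ∀ t, r' t = exp τ * r t) (hφ' : ∀ t, φ' t = φ t)
    (hv' : ∀ t, v' t = exp τ * v t) (hα' : ∀ t, α' t = α t)
    (hθ' : ∀ t, θ' t = θ t)
    (hAx' : ∀ t, A_x' t = exp τ * A_x t) (hAy' : ∀ t, A_y' t = exp τ * A_y t) :
    (∀ t, HasDerivAt r' (v' t * cos (α' t - φ' t)) t) ∧
    (∀ t, HasDerivAt φ' (v' t / r' t * sin (α' t - φ' t)) t) ∧
    (∀ t, HasDerivAt v' (A_x' t * cos (α' t - θ' t) + A_y' t * sin (α' t - θ' t)) t) ∧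
    (∀ t, HasDerivAt α'
      (-(A_x' t / v' t) * sin (α' t - θ' t) + A_y' t / v' t * cos (α' t - θ' t)) t) ∧
    (∀ t, HasDerivAt θ' (ω t) t) ∧
    (∀ t, φ' t - θ' t = φ t - θ t) := by
  have Hr : r' = fun t => exp τ * r t := funext hr'
  have Hφ : φ' = φ := funext hφ'
  have Hv : v' = fun t => exp τ * v t := funext hv'
  have Hα : α' = α := funext hα'
  have Hθ : θ' = θ := funext hθ'
  have he : exp τ ≠ 0 := (exp_pos τ).ne'
  subst Hr Hφ Hv Hα Hθ
  refine ⟨fun t => ?_, fun t => ?_, fun t => ?_, fun t => ?_, hθ, fun t => rfl⟩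
  · simpa [mul_assoc] using (hr t).const_mul (exp τ)
  · have h := hφ t
    simp only []
    rw [mul_div_mul_left _ _ he]
    exact h
  · have h := (hv t).const_mul (exp τ)
    simp only [hAx', hAy']
    simpa [mul_add, mul_assoc] using h
  · have h := hα t
    simp only [hAx', hAy', mul_div_mul_left _ _ he]
    exact h
end

section
/- For the HIV model, the vector field ξ = (T_Iδ, -T_Iδ, 0, 0, 0, δ(δ-ρ), Nρ, 0) (in coordinates (T_U, T_I, V, λ, ρ, δ, N, c)) is orthogonal to the differentials of the three output-derived functions h₁ = V, h₂ = T_U + T_I, and h̃₁ = λ - ρT_U - δT_I, i.e., dh₁·ξ = dh₂·ξ = dh̃₁·ξ = 0. -/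
/-!
All three functions are polynomial in the coordinates, so their differentials along `ξ` follow
from the product rule. For `h̃₁ = λ - ρ T_U - δ T_I` the contributions cancel:
`-ρ (T_I δ) - δ (-T_I δ) - T_I δ (δ - ρ) = 0`.
-/

section CoordinateDerivatives

variable {ι : Type*}

theorem fderiv_coord_apply (i : ι) (x v : ι → ℝ) :
    fderiv ℝ (fun y : ι → ℝ => y i) x v = v i := by
  rw [(hasFDerivAt_apply i x).fderiv]
  rfl

theorem fderiv_coord_add_coord_apply [Fintype ι] (i j : ι) (x v : ι → ℝ) :
    fderiv ℝ (fun y : ι → ℝ => y i + y j) x v = v i + v j := by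
  rw [((hasFDerivAt_apply i x).fun_add (hasFDerivAt_apply j x)).fderiv]
  rfl

theorem hasFDerivAt_coord_mul_coord [Fintype ι] (i j : ι) (x : ι → ℝ) :
    HasFDerivAt (fun y : ι → ℝ => y i * y j)
      (x i • ContinuousLinearMap.proj (R := ℝ) (φ := fun _ : ι => ℝ) j
        + x j • ContinuousLinearMap.proj i) x :=
  (hasFDerivAt_apply i x).fun_mul (hasFDerivAt_apply j x)

theorem fderiv_coord_sub_coord_mul_sub_coord_mul_apply [Fintype ι] (i j k l m : ι)
    (x v : ι → ℝ) :
    fderiv ℝ (fun y : ι → ℝ => y i - y j * y k - y l * y m) x v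
      = v i - (x j * v k + x k * v j) - (x l * v m + x m * v l) := by
  rw [(((hasFDerivAt_apply i x).fun_sub (hasFDerivAt_coord_mul_coord j k x)).fun_sub
    (hasFDerivAt_coord_mul_coord l m x)).fderiv]
  rfl

end CoordinateDerivatives

/-- HIV model: state x = (T_U, T_I, V, λ, ρ, δ, N, c) as x 0, ..., x 7. -/
theorem stmt_12
    (ξ : (Fin 8 → ℝ) → (Fin 8 → ℝ))
    (hξ : ∀ x, ξ x = ![x 1 * x 5, -(x 1 * x 5), 0, 0, 0,
        x 5 * (x 5 - x 4), x 6 * x 4, 0])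
    (h1 h2 ht1 : (Fin 8 → ℝ) → ℝ)
    (hh1 : ∀ x, h1 x = x 2)
    (hh2 : ∀ x, h2 x = x 0 + x 1)
    (hht1 : ∀ x, ht1 x = x 3 - x 4 * x 0 - x 5 * x 1) :
    ∀ x : Fin 8 → ℝ,
      fderiv ℝ h1 x (ξ x) = 0 ∧ fderiv ℝ h2 x (ξ x) = 0 ∧
      fderiv ℝ ht1 x (ξ x) = 0 := by
  obtain rfl : h1 = fun y => y 2 := funext hh1
  obtain rfl : h2 = fun y => y 0 + y 1 := funext hh2
  obtain rfl : ht1 = fun y => y 3 - y 4 * y 0 - y 5 * y 1 := funext hht1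
  intro x
  rw [fderiv_coord_apply, fderiv_coord_add_coord_apply,
    fderiv_coord_sub_coord_mul_sub_coord_mul_apply, hξ]
  refine ⟨rfl, ?_, ?_⟩ <;> simp only [Matrix.cons_val] <;> ring
end

section
/- For the SEIAR Covid model with state x = (S, E, I, A, R, μ₁, μ₂, γ, p), the two vector fields ξ₁ = (1, 0, 0, 0, -1, 0, 0, 0, 0) and ξ₂ = (E, -E, 0, 0, 0, 0, 0, γ, 0) are each orthogonal to the differentials of the functions h₁ = I, h₂ = A, h₃ = S + E + R, h₄ = -Aμ₂ - Eγ(p-1), h₅ = (1-p)/p (assuming p ≠ 0), h₆ = μ₂(Aμ₂ + Eγ(p-1)) + μ₁((1-p)/p)(Eγp - Iμ₁), and h̃₁ = γpE - μ₁I; that is, dh·ξᵢ = 0 for each such h and i = 1, 2. -/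
/-!
With coordinates `x 0, …, x 8` = `S, E, I, A, R, μ₁, μ₂, γ, p`, each of the seven functions is
a first integral of the flows of `ξ₁` and `ξ₂`. The flow of `ξ₁` is the translation `S ↦ S + t`,
`R ↦ R - t`; the flow of `ξ₂` is `E ↦ e⁻ᵗ E`, `γ ↦ eᵗ γ`, `S ↦ S + (1 - e⁻ᵗ) E`. Both preserve
`I`, `A`, `S + E + R`, `μ₁`, `μ₂`, `p` and the product `γ E`, and every `hᵢ` is a function of
these. A function constant along a curve has zero derivative in the direction of its velocity.
-/

open Real

theorem fderiv_apply_eq_zero_of_invariant_curve {E F : Type*} [NormedAddCommGroup E]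
    [NormedSpace ℝ E] [NormedAddCommGroup F] [NormedSpace ℝ F] {h : E → F} {c : ℝ → E} {x v : E}
    (hc₀ : c 0 = x) (hh : DifferentiableAt ℝ h x) (hc : HasDerivAt c v 0)
    (hinv : ∀ t, h (c t) = h x) : fderiv ℝ h x v = 0 := by
  subst hc₀
  have hderiv : HasDerivAt (h ∘ c) (fderiv ℝ h (c 0) v) 0 :=
    hh.hasFDerivAt.comp_hasDerivAt 0 hc
  rw [show h ∘ c = fun _ => h (c 0) from funext hinv] at hderiv
  exact hderiv.unique (hasDerivAt_const 0 _)

namespace SEIAR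

def shiftSR (x : Fin 9 → ℝ) (t : ℝ) : Fin 9 → ℝ :=
  ![x 0 + t, x 1, x 2, x 3, x 4 - t, x 5, x 6, x 7, x 8]

noncomputable def scaleEγ (x : Fin 9 → ℝ) (t : ℝ) : Fin 9 → ℝ :=
  ![x 0 + (1 - exp (-t)) * x 1, exp (-t) * x 1, x 2, x 3, x 4, x 5, x 6, exp t * x 7, x 8]

lemma shiftSR_zero (x : Fin 9 → ℝ) : shiftSR x 0 = x := by
  ext i; fin_cases i <;> simp [shiftSR]

lemma scaleEγ_zero (x : Fin 9 → ℝ) : scaleEγ x 0 = x := by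
  ext i; fin_cases i <;> simp [scaleEγ]

lemma hasDerivAt_shiftSR (x : Fin 9 → ℝ) :
    HasDerivAt (shiftSR x) ![1, 0, 0, 0, -1, 0, 0, 0, 0] 0 := by
  refine hasDerivAt_pi.2 fun i => ?_
  fin_cases i <;> simp only [shiftSR] <;> simp <;>
    first
    | exact hasDerivAt_const _ _
    | exact (hasDerivAt_id' 0).const_add _
    | exact (hasDerivAt_id' 0).const_sub _

lemma hasDerivAt_scaleEγ (x : Fin 9 → ℝ) :
    HasDerivAt (scaleEγ x) ![x 1, -x 1, 0, 0, 0, 0, 0, x 7, 0] 0 := by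
  refine hasDerivAt_pi.2 fun i => ?_
  fin_cases i <;> simp only [scaleEγ] <;> simp <;>
    first
    | exact hasDerivAt_const _ _
    | simpa using ((hasDerivAt_neg' 0).exp.const_sub 1).mul_const (x 1)
    | simpa using (hasDerivAt_neg' 0).exp.mul_const (x 1)
    | simpa using (hasDerivAt_exp 0).mul_const (x 7)

end SEIAR

open SEIAR in
/-- SEIAR model: state x = (S, E, I, A, R, μ₁, μ₂, γ, p) as x 0, ..., x 8. -/
theorem stmt_13
    (ξ₁ ξ₂ : (Fin 9 → ℝ) → (Fin 9 → ℝ))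
    (hξ₁ : ∀ x, ξ₁ x = ![1, 0, 0, 0, -1, 0, 0, 0, 0])
    (hξ₂ : ∀ x, ξ₂ x = ![x 1, -(x 1), 0, 0, 0, 0, 0, x 7, 0])
    (h1 h2 h3 h4 h5 h6 ht1 : (Fin 9 → ℝ) → ℝ)
    (hh1 : ∀ x, h1 x = x 2)
    (hh2 : ∀ x, h2 x = x 3)
    (hh3 : ∀ x, h3 x = x 0 + x 1 + x 4)
    (hh4 : ∀ x, h4 x = -(x 3 * x 6) - x 1 * x 7 * (x 8 - 1))
    (hh5 : ∀ x, h5 x = (1 - x 8) / x 8)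
    (hh6 : ∀ x, h6 x = x 6 * (x 3 * x 6 + x 1 * x 7 * (x 8 - 1)) +
        x 5 * ((1 - x 8) / x 8) * (x 1 * x 7 * x 8 - x 2 * x 5))
    (hht1 : ∀ x, ht1 x = x 7 * x 8 * x 1 - x 5 * x 2) :
    ∀ x : Fin 9 → ℝ, x 8 ≠ 0 →
      ∀ h ∈ ({h1, h2, h3, h4, h5, h6, ht1} : Set ((Fin 9 → ℝ) → ℝ)),
        fderiv ℝ h x (ξ₁ x) = 0 ∧ fderiv ℝ h x (ξ₂ x) = 0 := by
  obtain rfl : h1 = _ := funext hh1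
  obtain rfl : h2 = _ := funext hh2
  obtain rfl : h3 = _ := funext hh3
  obtain rfl : h4 = _ := funext hh4
  obtain rfl : h5 = _ := funext hh5
  obtain rfl : h6 = _ := funext hh6
  obtain rfl : ht1 = _ := funext hht1
  intro x hx h hmem
  simp only [Set.mem_insert_iff, Set.mem_singleton_iff] at hmem
  have hdiff : DifferentiableAt ℝ h x := by
    rcases hmem with rfl | rfl | rfl | rfl | rfl | rfl | rfl <;> fun_prop (disch := exact hx)
  have hshift : ∀ t, h (shiftSR x t) = h x := by
    intro t
    rcases hmem with rfl | rfl | rfl | rfl | rfl | rfl | rfl <;>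
      simp only [shiftSR, Matrix.cons_val]
    ring
  have hscale : ∀ t, h (scaleEγ x t) = h x := by
    intro t
    rcases hmem with rfl | rfl | rfl | rfl | rfl | rfl | rfl <;>
      simp only [scaleEγ, Matrix.cons_val, exp_neg] <;> field_simp
    ring
  rw [hξ₁, hξ₂]
  exact ⟨fderiv_apply_eq_zero_of_invariant_curve (shiftSR_zero x) hdiff (hasDerivAt_shiftSR x)
      hshift,
    fderiv_apply_eq_zero_of_invariant_curve (scaleEγ_zero x) hdiff (hasDerivAt_scaleEγ x) hscale⟩
end

section
/- Let η'(t,τ) be defined by η'(t,τ) = [η T_U V ρ e^{ρτ} + (T_Iδ² - T_Iδρ - η T_U V δ)(e^{ρτ} - 1)] / [V(T_Iδ + T_Uρ)e^{ρτ} - V T_Iδ], where all quantities on the right are evaluated at time t. Then η' satisfies the transport PDE ∂η'/∂τ = T_I'δ'(δ' - ρ)/(T_U'V') - δ'(T_I' + T_U')η'/T_U', where T_U'(t,τ), T_I'(t,τ), δ'(τ), V'(t,τ) = V(t) are the corresponding transformed quantities T_U' = T_U + T_I - (T_I/ρ)(δe^{-ρτ}+ρ-δ), T_I' = (T_I/ρ)(δe^{-ρτ}+ρ-δ),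 δ' = δρ/((ρ-δ)e^{ρτ}+δ), and η'(t,0) = η(t) (assuming all denominators are nonzero and ρ ≠ 0). -/
/-!
With `E = exp (ρ τ)`, the closed form `η'` is a Möbius function of `E`, and `dE/dτ = ρ E`.
The transformed quantities are rational in `E` as well: `T_I' = T_I ((ρ - δ) E + δ) / (ρ E)`,
`δ' = δ ρ / ((ρ - δ) E + δ)`, and `T_U' = D / (V ρ E)` where `D` is the denominator of `η'`.
Hence both sides of the transport equation are rational functions of `E` over `D ^ 2`,
and the equation becomes a polynomial identity.
-/

open Real

theorem hasDerivAt_mobius_exp_mul {a b c d ρ τ : ℝ} (h : c * exp (ρ * τ) + d ≠ 0) :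
    HasDerivAt (fun s => (a * exp (ρ * s) + b) / (c * exp (ρ * s) + d))
      ((a * d - b * c) * ρ * exp (ρ * τ) / (c * exp (ρ * τ) + d) ^ 2) τ := by
  have hexp : HasDerivAt (fun s => exp (ρ * s)) (exp (ρ * τ) * ρ) τ := by
    simpa using ((hasDerivAt_id τ).const_mul ρ).exp
  exact (((hexp.const_mul a).add_const b).div ((hexp.const_mul c).add_const d) h).congr_deriv
    (by ring)

theorem div_mul_exp_neg_eq {T ρ δ τ : ℝ} (hρ : ρ ≠ 0) :
    T / ρ * (δ * exp (-ρ * τ) + ρ - δ) =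
      T * ((ρ - δ) * exp (ρ * τ) + δ) / (ρ * exp (ρ * τ)) := by
  rw [neg_mul, exp_neg]
  field_simp
  ring

theorem hiv_transport_rhs_eq {TU TI V η ρ δ E TU' TI' δ' η' : ℝ}
    (hρ : ρ ≠ 0) (hE : E ≠ 0) (hV : V ≠ 0) (hF : (ρ - δ) * E + δ ≠ 0)
    (hD : V * (TI * δ + TU * ρ) * E - V * TI * δ ≠ 0)
    (hTI' : TI' = TI * ((ρ - δ) * E + δ) / (ρ * E)) (hTU' : TU' = TU + TI - TI')
    (hδ' : δ' = δ * ρ / ((ρ - δ) * E + δ))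
    (hη' : η' = (η * TU * V * ρ * E + (TI * δ ^ 2 - TI * δ * ρ - η * TU * V * δ) * (E - 1)) /
      (V * (TI * δ + TU * ρ) * E - V * TI * δ)) :
    TI' * δ' * (δ' - ρ) / (TU' * V) - δ' * (TI' + TU') * η' / TU' =
      V * TU * ρ ^ 2 * δ * E * (TI * (δ - ρ) - η * V * (TI + TU)) /
        (V * (TI * δ + TU * ρ) * E - V * TI * δ) ^ 2 := by
  have hTU'_eq : TU' = (V * (TI * δ + TU * ρ) * E - V * TI * δ) / (V * ρ * E) := by
    rw [hTU', hTI']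
    field_simp
    ring
  rw [hTU'_eq, hTI', hδ', hη']
  -- abstracting the denominators lets `field_simp` use `hD` and `hF` as they are
  generalize hDdef : V * (TI * δ + TU * ρ) * E - V * TI * δ = D at hD ⊢
  generalize hFdef : (ρ - δ) * E + δ = F at hF ⊢
  field_simp
  subst hDdef hFdef
  ring

theorem stmt_15 (T_U T_I V η : ℝ → ℝ) (ρ δ : ℝ) (hρ : ρ ≠ 0)
    (η' T_U' T_I' V' : ℝ → ℝ → ℝ) (δ' : ℝ → ℝ)
    (hη' : ∀ t τ, η' t τ =
      (η t * T_U t * V t * ρ * exp (ρ * τ) +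
        (T_I t * δ ^ 2 - T_I t * δ * ρ - η t * T_U t * V t * δ) * (exp (ρ * τ) - 1)) /
      (V t * (T_I t * δ + T_U t * ρ) * exp (ρ * τ) - V t * T_I t * δ))
    (hTU' : ∀ t τ, T_U' t τ =
      T_U t + T_I t - (T_I t / ρ) * (δ * exp (-ρ * τ) + ρ - δ))
    (hTI' : ∀ t τ, T_I' t τ = (T_I t / ρ) * (δ * exp (-ρ * τ) + ρ - δ))
    (hV' : ∀ t τ, V' t τ = V t)
    (hδ' : ∀ τ, δ' τ = δ * ρ / ((ρ - δ) * exp (ρ * τ) + δ)) :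
    (∀ t τ, (ρ - δ) * exp (ρ * τ) + δ ≠ 0 → V t ≠ 0 →
      V t * (T_I t * δ + T_U t * ρ) * exp (ρ * τ) - V t * T_I t * δ ≠ 0 →
      T_U' t τ ≠ 0 →
      HasDerivAt (fun s => η' t s)
        (T_I' t τ * δ' τ * (δ' τ - ρ) / (T_U' t τ * V' t τ) -
          δ' τ * (T_I' t τ + T_U' t τ) * η' t τ / T_U' t τ) τ) ∧
    (∀ t, V t ≠ 0 → T_U t ≠ 0 → η' t 0 = η t) := by
  refine ⟨fun t τ hF hV hD _ => ?_, fun t hV hTU => ?_⟩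
  · set K := T_I t * δ ^ 2 - T_I t * δ * ρ - η t * T_U t * V t * δ with hK
    have hη'_mobius : (fun s => η' t s) = fun s =>
        ((η t * T_U t * V t * ρ + K) * exp (ρ * s) + -K) /
          (V t * (T_I t * δ + T_U t * ρ) * exp (ρ * s) + -(V t * T_I t * δ)) := by
      funext s
      rw [hη', hK]
      ring
    rw [hη'_mobius, hV', hiv_transport_rhs_eq hρ (exp_ne_zero _) hV hF hD
      ((hTI' t τ).trans (div_mul_exp_neg_eq hρ)) (by rw [hTU' t τ, hTI' t τ] : T_U' t τ = _)
      (hδ' τ) (hη' t τ)]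
    exact (hasDerivAt_mobius_exp_mul (by rwa [← sub_eq_add_neg])).congr_deriv (by ring)
  · have hden : V t * (T_I t * δ + T_U t * ρ) * 1 - V t * T_I t * δ = V t * T_U t * ρ := by ring
    rw [hη', mul_zero, exp_zero, sub_self, mul_zero, add_zero, hden]
    field_simp
end

section
/- For the visual-inertial system, the vector field ξ = (r, 0, v, 0, 0, A_y) on the state space with coordinates (r, φ, v, α, θ, A_y) is orthogonal to the differentials of h = φ - θ, h̃₁ = (v/r)sin(α-φ), h̃₂ = A_y cos(φ-θ)/r, and h₃ = A_y sin(φ-θ)/r; that is, dh·ξ = dh̃₁·ξ = dh̃₂·ξ = dh₃·ξ = 0 (assuming r ≠ 0). -/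
private lemma proj_diff (i : Fin 6) (x : Fin 6 → ℝ) :
    DifferentiableAt ℝ (fun y : Fin 6 → ℝ => y i) x :=
  (ContinuousLinearMap.proj (R := ℝ) (φ := fun _ : Fin 6 => ℝ) i).differentiableAt

private lemma key (f : (Fin 6 → ℝ) → ℝ) (x : Fin 6 → ℝ)
    (hdiff : DifferentiableAt ℝ f x)
    (hconst : ∀ t : ℝ,
      f ![Real.exp t * x 0, x 1, Real.exp t * x 2, x 3, x 4, Real.exp t * x 5] = f x) :
    fderiv ℝ f x ![x 0, 0, x 2, 0, 0, x 5] = 0 := by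
  set v : Fin 6 → ℝ := ![x 0, 0, x 2, 0, 0, x 5] with hv
  set γ : ℝ → (Fin 6 → ℝ) :=
    fun t => ![Real.exp t * x 0, x 1, Real.exp t * x 2, x 3, x 4, Real.exp t * x 5] with hγ
  have hγ0 : γ 0 = x := by
    funext i
    fin_cases i <;> (simp [hγ]; try rfl)
  have hderiv : HasDerivAt γ v 0 := by
    rw [hasDerivAt_pi]
    intro i
    fin_cases i <;>
      first
        | exact (show HasDerivAt (fun _ : ℝ => x 1) 0 0 from hasDerivAt_const 0 _)
        | exact (show HasDerivAt (fun _ : ℝ => x 3) 0 0 from hasDerivAt_const 0 _)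
        | exact (show HasDerivAt (fun _ : ℝ => x 4) 0 0 from hasDerivAt_const 0 _)
        | exact (show HasDerivAt (fun t : ℝ => Real.exp t * x 0) (x 0) 0 from by
            simpa using (Real.hasDerivAt_exp 0).mul_const (x 0))
        | exact (show HasDerivAt (fun t : ℝ => Real.exp t * x 2) (x 2) 0 from by
            simpa using (Real.hasDerivAt_exp 0).mul_const (x 2))
        | exact (show HasDerivAt (fun t : ℝ => Real.exp t * x 5) (x 5) 0 from by
            simpa using (Real.hasDerivAt_exp 0).mul_const (x 5))
  have hF : HasFDerivAt f (fderiv ℝ f x) (γ 0) := by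
    rw [hγ0]; exact hdiff.hasFDerivAt
  have h1 : HasDerivAt (f ∘ γ) (fderiv ℝ f x v) 0 := hF.comp_hasDerivAt 0 hderiv
  have h2 : f ∘ γ = fun _ => f x := funext fun t => hconst t
  rw [h2] at h1
  exact h1.unique (hasDerivAt_const 0 (f x))

/-- 2D visual-inertial system: extended state x = (r, φ, v, α, θ, A_y) = x 0, ..., x 5. -/
theorem stmt_17
    (ξ : (Fin 6 → ℝ) → (Fin 6 → ℝ))
    (hξ : ∀ x, ξ x = ![x 0, 0, x 2, 0, 0, x 5])
    (h ht1 ht2 h3 : (Fin 6 → ℝ) → ℝ)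
    (hh : ∀ x, h x = x 1 - x 4)
    (hht1 : ∀ x, ht1 x = (x 2 / x 0) * Real.sin (x 3 - x 1))
    (hht2 : ∀ x, ht2 x = x 5 * Real.cos (x 1 - x 4) / x 0)
    (hh3 : ∀ x, h3 x = x 5 * Real.sin (x 1 - x 4) / x 0) :
    ∀ x : Fin 6 → ℝ, x 0 ≠ 0 →
      fderiv ℝ h x (ξ x) = 0 ∧ fderiv ℝ ht1 x (ξ x) = 0 ∧
      fderiv ℝ ht2 x (ξ x) = 0 ∧ fderiv ℝ h3 x (ξ x) = 0 := by
  intro x hx0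
  have hhf : h = fun y => y 1 - y 4 := funext hh
  have hht1f : ht1 = fun y => (y 2 / y 0) * Real.sin (y 3 - y 1) := funext hht1
  have hht2f : ht2 = fun y => y 5 * Real.cos (y 1 - y 4) / y 0 := funext hht2
  have hh3f : h3 = fun y => y 5 * Real.sin (y 1 - y 4) / y 0 := funext hh3
  have hexp : ∀ t : ℝ, Real.exp t ≠ 0 := fun t => (Real.exp_pos t).ne'
  have d14 : DifferentiableAt ℝ (fun y : Fin 6 → ℝ => Real.sin (y 1 - y 4)) x :=
    (Real.differentiable_sin.differentiableAt).comp x ((proj_diff 1 x).sub (proj_diff 4 x))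
  have d14c : DifferentiableAt ℝ (fun y : Fin 6 → ℝ => Real.cos (y 1 - y 4)) x :=
    (Real.differentiable_cos.differentiableAt).comp x ((proj_diff 1 x).sub (proj_diff 4 x))
  have d31 : DifferentiableAt ℝ (fun y : Fin 6 → ℝ => Real.sin (y 3 - y 1)) x :=
    (Real.differentiable_sin.differentiableAt).comp x ((proj_diff 3 x).sub (proj_diff 1 x))
  have d20 : DifferentiableAt ℝ (fun y : Fin 6 → ℝ => y 2 / y 0) x :=
    by
    simp only [div_eq_mul_inv]
    exact (proj_diff 2 x).mul ((proj_diff 0 x).inv hx0)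
  have D1 : DifferentiableAt ℝ (fun y : Fin 6 → ℝ => (y 2 / y 0) * Real.sin (y 3 - y 1)) x :=
    d20.mul d31
  have D2 : DifferentiableAt ℝ (fun y : Fin 6 → ℝ => y 5 * Real.cos (y 1 - y 4) / y 0) x :=
    by
      simp only [div_eq_mul_inv]
      exact ((proj_diff 5 x).mul d14c).mul ((proj_diff 0 x).inv hx0)
  have D3 : DifferentiableAt ℝ (fun y : Fin 6 → ℝ => y 5 * Real.sin (y 1 - y 4) / y 0) x :=
    by
      simp only [div_eq_mul_inv]
      exact ((proj_diff 5 x).mul d14).mul ((proj_diff 0 x).inv hx0)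
  rw [hξ, hhf, hht1f, hht2f, hh3f]
  refine ⟨?_, ?_, ?_, ?_⟩
  · refine key _ x ((proj_diff 1 x).sub (proj_diff 4 x)) (fun t => ?_)
    show x 1 - x 4 = x 1 - x 4
    rfl
  · refine key _ x D1 (fun t => ?_)
    show (Real.exp t * x 2 / (Real.exp t * x 0)) * Real.sin (x 3 - x 1)
        = (x 2 / x 0) * Real.sin (x 3 - x 1)
    rw [mul_div_mul_left _ _ (hexp t)]
  · refine key _ x D2 (fun t => ?_)
    show (Real.exp t * x 5) * Real.cos (x 1 - x 4) / (Real.exp t * x 0)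
        = x 5 * Real.cos (x 1 - x 4) / x 0
    rw [show (Real.exp t * x 5) * Real.cos (x 1 - x 4)
          = Real.exp t * (x 5 * Real.cos (x 1 - x 4)) by ring,
      mul_div_mul_left _ _ (hexp t)]
  · refine key _ x D3 (fun t => ?_)
    show (Real.exp t * x 5) * Real.sin (x 1 - x 4) / (Real.exp t * x 0)
        = x 5 * Real.sin (x 1 - x 4) / x 0
    rw [show (Real.exp t * x 5) * Real.sin (x 1 - x 4)
          = Real.exp t * (x 5 * Real.sin (x 1 - x 4)) by ring,
      mul_div_mul_left _ _ (hexp t)]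
end
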